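/- Let 𝒞 be a category with finite limits. Let v : s ⟶ j and u : a ⟶ i be morphisms of 𝒞, and let i ⟵p— z —q⟶ j be a span in 𝒞. Then there is a bijection between the set of morphisms in the slice category 𝒞/j from v to q_*(p^*(u)) and the set of pairs consisting of a morphism f : s ⟶ a together with a morphism in the slice category 𝒞/(i × j) from ⟨f ≫ u, v⟩ : s ⟶ i × j to ⟨p, q⟩ : z ⟶ i × j. That is, 𝒞/j(v, q_* p^* u) ≅ Σ_{f ∈ 𝒞(s,a)} 𝒞/(i × j)(⟨f ≫ u, v⟩, ⟨p, q⟩). -/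

import Mathlib

open CategoryTheory CategoryTheory.Limits

/-!
A morphism `v ⟶ q_* p^* u` over `j` is a map `k : s ⟶ a ×_i z` whose second component composed
with `q` is `v`. By the universal property of the pullback, `k` is a pair `f : s ⟶ a`,
`g : s ⟶ z` with `f ≫ u = g ≫ p` and `g ≫ q = v`; for fixed `f`, these two equations say exactly
that `g` is a morphism `⟨f ≫ u, v⟩ ⟶ ⟨p, q⟩` over `i × j`.
-/

namespace CategoryTheory

variable {C : Type u} [Category.{v} C]

def Over.mkHomEquiv {T X : C} (f : X ⟶ T) (B : Over T) :
    (Over.mk f ⟶ B) ≃ {k : X ⟶ B.left // k ≫ B.hom = f} where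
  toFun k := ⟨k.left, Over.w k⟩
  invFun k := Over.homMk k.1 k.2
  left_inv _ := rfl
  right_inv _ := rfl

namespace Limits

noncomputable def pullback.homEquiv {W X Y Z : C} (f : X ⟶ Z) (g : Y ⟶ Z) [HasPullback f g] :
    (W ⟶ pullback f g) ≃ {xy : (W ⟶ X) × (W ⟶ Y) // xy.1 ≫ f = xy.2 ≫ g} where
  toFun k := ⟨(k ≫ pullback.fst f g, k ≫ pullback.snd f g), by simp [pullback.condition]⟩
  invFun xy := pullback.lift xy.1.1 xy.1.2 xy.2
  left_inv k := by ext <;> simp [pullback.lift_fst, pullback.lift_snd]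
  right_inv xy := by ext <;> simp [pullback.lift_fst, pullback.lift_snd]

theorem prod.comp_lift_eq_lift_iff {W X Y Z : C} [HasBinaryProduct X Y] (g : W ⟶ Z)
    (p : Z ⟶ X) (q : Z ⟶ Y) (x : W ⟶ X) (y : W ⟶ Y) :
    g ≫ prod.lift p q = prod.lift x y ↔ g ≫ p = x ∧ g ≫ q = y := by
  simp only [prod.comp_lift, prod.hom_ext_iff, prod.lift_fst, prod.lift_snd]

end Limits

end CategoryTheory

/-- **Lemma (dependent lens hom decomposition).**
For a finitely complete category `𝒞`, morphisms `v : s ⟶ j`, `u : a ⟶ i` and a span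
`i ⟵p— z —q⟶ j`, there is a bijection
`𝒞/j(v, q_* p^* u) ≅ Σ_{f ∈ 𝒞(s,a)} 𝒞/(i × j)(⟨f ≫ u, v⟩, ⟨p, q⟩)`. -/
theorem dependent_lens_hom_equiv {C : Type u} [Category.{v} C] [HasFiniteLimits C]
    {s j a i z : C} (v : s ⟶ j) (u : a ⟶ i) (p : z ⟶ i) (q : z ⟶ j) :
    Nonempty
      ((Over.mk v ⟶ (Over.map q).obj ((Over.pullback p).obj (Over.mk u))) ≃
        (Σ f : s ⟶ a,
          (Over.mk (prod.lift (f ≫ u) v) ⟶ Over.mk (prod.lift p q)))) :=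
  ⟨calc (Over.mk v ⟶ (Over.map q).obj ((Over.pullback p).obj (Over.mk u)))
      _ ≃ {k : s ⟶ pullback u p // k ≫ pullback.snd u p ≫ q = v} :=
        Over.mkHomEquiv v _
      _ ≃ {fg : {fg : (s ⟶ a) × (s ⟶ z) // fg.1 ≫ u = fg.2 ≫ p} // fg.1.2 ≫ q = v} :=
        (pullback.homEquiv u p).subtypeEquiv fun k => by rw [← Category.assoc]; rfl
      _ ≃ {fg : (s ⟶ a) × (s ⟶ z) // fg.1 ≫ u = fg.2 ≫ p ∧ fg.2 ≫ q = v} :=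
        Equiv.subtypeSubtypeEquivSubtypeInter (fun fg : (s ⟶ a) × (s ⟶ z) => fg.1 ≫ u = fg.2 ≫ p)
          (fun fg => fg.2 ≫ q = v)
      _ ≃ Σ f : s ⟶ a, {g : s ⟶ z // f ≫ u = g ≫ p ∧ g ≫ q = v} :=
        Equiv.subtypeProdEquivSigmaSubtype fun f g => f ≫ u = g ≫ p ∧ g ≫ q = v
      _ ≃ Σ f : s ⟶ a, (Over.mk (prod.lift (f ≫ u) v) ⟶ Over.mk (prod.lift p q)) :=
        Equiv.sigmaCongrRight fun f =>
          (Equiv.subtypeEquivRight fun g => show _ ↔ g ≫ prod.lift p q = _ by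
            rw [prod.comp_lift_eq_lift_iff, eq_comm]).trans
            (Over.mkHomEquiv (prod.lift (f ≫ u) v) (Over.mk (prod.lift p q))).symm⟩
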